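/- arXiv:1812.00156 — 7 statements merged into one kernel-verified Lean document; each statement's English description precedes it below -/
import Mathlib

section
/- (Theorem 1, perfect reconstruction of the M-channel critically sampled spectral graph filter bank) Let U ∈ ℝ^{N×N} be an orthogonal matrix and, for each m ∈ {0,…,M−1}, let U_{1,m} ∈ ℝ^{n×n} be an orthogonal matrix. If the filter responses satisfy the PR conditions with constant c, then for every signal f ∈ ℝ^N, the reconstructed signal f̂ = ∑_{m=0}^{M−1} U G_m(Λ) S̃_{u,m} U_{1,m}ᵀ U_{1,m} S̃_{d,m} H_m(Λ) Uᵀ f equals c² f. -/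
/-!
Theorem 1 of "M-Channel Critically Sampled Spectral Graph Filter Banks With
Symmetric Structure": perfect reconstruction of the M-channel critically
sampled spectral graph filter bank.

We index `ℝ^N` (with `N = M * n`) by `Fin M × Fin n`, the pair `(q, r)`
corresponding to the index `q * n + r`.
-/

open Matrix

/-- The analysis sampling matrix `S̃_{d,m} ∈ ℝ^{n×N}`: the block matrix
`[Iₙ, Jₙ, Iₙ, Jₙ, …]` for even `m` and `[Iₙ, −Jₙ, Iₙ, −Jₙ, …]` for odd `m`,
where `Jₙ` is the counter identity.  Entrywise, the `(i, (q, r))` entry is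
`δ_{i,r}` if `q` is even and `(−1)^m δ_{i,n−1−r}` if `q` is odd. -/
def tildeSd (M n : ℕ) (m : ℕ) : Matrix (Fin n) (Fin M × Fin n) ℝ :=
  fun i qr =>
    if Even (qr.1 : ℕ) then (if i = qr.2 then 1 else 0)
    else (-1 : ℝ) ^ m * (if i = qr.2.rev then 1 else 0)

/-- The synthesis sampling matrix `S̃_{u,m} = S̃_{d,m}ᵀ ∈ ℝ^{N×n}`. -/
def tildeSu (M n : ℕ) (m : ℕ) : Matrix (Fin M × Fin n) (Fin n) ℝ :=
  (tildeSd M n m)ᵀ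

lemma SuSd_apply (M n m : ℕ) (k k' : Fin M × Fin n) :
    (tildeSu M n m * tildeSd M n m) k k' =
      if Even (k.1 : ℕ) ↔ Even (k'.1 : ℕ) then (if k.2 = k'.2 then 1 else 0)
      else (-1 : ℝ) ^ m * (if k.2 = k'.2.rev then 1 else 0) := by
  obtain ⟨q, r⟩ := k
  obtain ⟨q', r'⟩ := k'
  simp only [tildeSu, tildeSd, Matrix.mul_apply, Matrix.transpose_apply]
  by_cases hq : Even (q : ℕ) <;> by_cases hq' : Even (q' : ℕ) <;>
    simp [hq, hq', Finset.sum_ite_eq, Fin.rev_eq_iff, ite_and, mul_ite,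
      Fin.rev_rev, eq_comm, ← pow_add, ← two_mul, pow_mul]
  · simp [show (r' = r.rev) ↔ (r = r'.rev) from by
      rw [eq_comm, Fin.rev_eq_iff]]

lemma key (M n : ℕ)
    (lam : Fin M × Fin n → ℝ) (H G : ℕ → ℝ → ℝ) (c : ℝ)
    (hPR1 : ∀ (q : Fin M) (r : Fin n),
      ∑ m ∈ Finset.range M, G m (lam (q, r)) * H m (lam (q, r)) = c ^ 2)
    (hPR2 : ∀ (q q' : Fin M) (r : Fin n), q ≠ q' → Even ((q : ℤ) - (q' : ℤ)) →
      ∑ m ∈ Finset.range M, G m (lam (q, r)) * H m (lam (q', r)) = 0)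
    (hPR3 : ∀ (q q' : Fin M) (r : Fin n), Odd ((q : ℤ) - (q' : ℤ)) →
      ∑ m ∈ Finset.range M,
        (-1 : ℝ) ^ m * G m (lam (q, r)) * H m (lam (q', r.rev)) = 0) :
    (∑ m ∈ Finset.range M,
      Matrix.diagonal (fun k => G m (lam k)) * (tildeSu M n m * tildeSd M n m) *
        Matrix.diagonal (fun k => H m (lam k))) = (c ^ 2) • (1 : Matrix (Fin M × Fin n) (Fin M × Fin n) ℝ) := by
  ext k k'
  obtain ⟨q, r⟩ := k
  obtain ⟨q', r'⟩ := k'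
  simp only [Matrix.sum_apply, Matrix.diagonal_mul, Matrix.mul_diagonal,
    SuSd_apply, Matrix.smul_apply, Matrix.one_apply, smul_eq_mul]
  have hparity : (Even ((q : ℕ)) ↔ Even ((q' : ℕ))) ↔ Even ((q : ℤ) - (q' : ℤ)) := by
    rw [Int.even_sub]
    simp [Int.even_coe_nat]
  by_cases hp : Even ((q : ℕ)) ↔ Even ((q' : ℕ))
  · simp only [hp, if_true]
    by_cases hr : r = r'
    · subst hr
      by_cases hq : q = q'
      · subst hq
        simpa using hPR1 q r
      · rw [if_neg (show ((q,r) : Fin M × Fin n) ≠ (q',r) from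
          fun h => hq (Prod.ext_iff.mp h).1), mul_zero,
          ← hPR2 q q' r hq (hparity.mp hp)]
        exact Finset.sum_congr rfl fun m _ => by simp
    · have hne : ((q,r) : Fin M × Fin n) ≠ (q',r') := by simp [hr]
      simp [hr, hne]
  · simp only [hp, if_false]
    have hq : q ≠ q' := by rintro rfl; exact hp Iff.rfl
    have hne : ((q,r) : Fin M × Fin n) ≠ (q',r') := by simp [hq]
    rw [if_neg hne, mul_zero]
    by_cases hr : r = r'.rev
    · have hodd : Odd ((q : ℤ) - (q' : ℤ)) :=
        Int.not_even_iff_odd.mp (fun h => hp (hparity.mpr h))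
      have hrev : r' = r.rev := by rw [hr, Fin.rev_rev]
      have h3 := hPR3 q q' r hodd
      rw [← hrev] at h3
      rw [← h3]
      exact Finset.sum_congr rfl fun m _ => by rw [if_pos hr]; ring
    · simp [hr]
/-- **Theorem 1.** If the filter responses `H_m`, `G_m` satisfy the perfect
reconstruction conditions with constant `c`, then for every signal `f ∈ ℝ^N`,
the reconstructed signal
`f̂ = ∑_{m=0}^{M−1} U G_m(Λ) S̃_{u,m} U_{1,m}ᵀ U_{1,m} S̃_{d,m} H_m(Λ) Uᵀ f`
equals `c² f`. -/
theorem mChannel_perfect_reconstruction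
    (M n : ℕ) (hM : 0 < M) (hn : 0 < n)
    (lam : Fin M × Fin n → ℝ) (H G : ℕ → ℝ → ℝ) (c : ℝ)
    (U : Matrix (Fin M × Fin n) (Fin M × Fin n) ℝ)
    (hU : Uᵀ * U = 1) (hU' : U * Uᵀ = 1)
    (U1 : ℕ → Matrix (Fin n) (Fin n) ℝ)
    (hU1 : ∀ m, m < M → (U1 m)ᵀ * U1 m = 1)
    (hU1' : ∀ m, m < M → U1 m * (U1 m)ᵀ = 1)
    (hPR1 : ∀ (q : Fin M) (r : Fin n),
      ∑ m ∈ Finset.range M, G m (lam (q, r)) * H m (lam (q, r)) = c ^ 2)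
    (hPR2 : ∀ (q q' : Fin M) (r : Fin n), q ≠ q' → Even ((q : ℤ) - (q' : ℤ)) →
      ∑ m ∈ Finset.range M, G m (lam (q, r)) * H m (lam (q', r)) = 0)
    (hPR3 : ∀ (q q' : Fin M) (r : Fin n), Odd ((q : ℤ) - (q' : ℤ)) →
      ∑ m ∈ Finset.range M,
        (-1 : ℝ) ^ m * G m (lam (q, r)) * H m (lam (q', r.rev)) = 0)
    (f : Fin M × Fin n → ℝ) :
    (∑ m ∈ Finset.range M,
        U * Matrix.diagonal (fun k => G m (lam k)) * tildeSu M n m * (U1 m)ᵀ *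
          U1 m * tildeSd M n m * Matrix.diagonal (fun k => H m (lam k)) * Uᵀ) *ᵥ f
      = c ^ 2 • f := by
  have hstep : ∀ m, m < M →
      U * Matrix.diagonal (fun k => G m (lam k)) * tildeSu M n m * (U1 m)ᵀ *
          U1 m * tildeSd M n m * Matrix.diagonal (fun k => H m (lam k)) * Uᵀ
      = U * (Matrix.diagonal (fun k => G m (lam k)) * (tildeSu M n m * tildeSd M n m) *
          Matrix.diagonal (fun k => H m (lam k))) * Uᵀ := by
    intro m hm
    rw [show U * Matrix.diagonal (fun k => G m (lam k)) * tildeSu M n m * (U1 m)ᵀ *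
          U1 m * tildeSd M n m * Matrix.diagonal (fun k => H m (lam k)) * Uᵀ
        = U * Matrix.diagonal (fun k => G m (lam k)) * tildeSu M n m * ((U1 m)ᵀ *
          U1 m) * tildeSd M n m * Matrix.diagonal (fun k => H m (lam k)) * Uᵀ by
        simp only [Matrix.mul_assoc], hU1 m hm, Matrix.mul_one]
    simp only [Matrix.mul_assoc]
  rw [Finset.sum_congr rfl (fun m hm => hstep m (Finset.mem_range.mp hm)),
    ← Finset.sum_mul, ← Finset.mul_sum,
    key M n lam H G c hPR1 hPR2 hPR3]
  rw [Matrix.mul_smul, Matrix.mul_one, Matrix.smul_mul, hU']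
  simp [Matrix.smul_mulVec]
end

section
/- (Matrix form of Theorem 1) If the filter responses satisfy the PR conditions with constant c, then ∑_{m=0}^{M−1} G_m(Λ) S̃_{u,m} S̃_{d,m} H_m(Λ) = c² I_N, where I_N is the N×N identity matrix. -/
/-!
Matrix form of Theorem 1: if the filter responses satisfy the perfect
reconstruction conditions with constant `c`, then
`∑_{m=0}^{M−1} G_m(Λ) S̃_{u,m} S̃_{d,m} H_m(Λ) = c² I_N`.

We index `ℝ^N` (with `N = M * n`) by `Fin M × Fin n`, the pair `(q, r)`
corresponding to the index `q * n + r`.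
-/

open Matrix

lemma tildeSuSd_apply (M n m : ℕ) (q q' : Fin M) (r r' : Fin n) :
    (tildeSu M n m * tildeSd M n m) (q, r) (q', r') =
      if (Even (q : ℕ) ↔ Even (q' : ℕ)) then (if r = r' then 1 else 0)
      else (-1 : ℝ) ^ m * (if r = r'.rev then 1 else 0) := by
  have hsq : (-1 : ℝ) ^ m * (-1) ^ m = 1 := by
    rw [← sq, ← pow_mul, mul_comm, pow_mul, neg_one_sq, one_pow]
  simp only [Matrix.mul_apply, tildeSu, tildeSd, Matrix.transpose_apply]
  by_cases hq : Even (q : ℕ) <;> by_cases hq' : Even (q' : ℕ) <;>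
    simp [hq, hq', mul_ite, ite_mul, Finset.sum_ite_eq, eq_comm,
      Fin.rev_eq_iff, hsq]
  simp only [show (r' = r.rev) ↔ (r = r'.rev) from
    ⟨fun h => by simp [h, Fin.rev_rev], fun h => by simp [h, Fin.rev_rev]⟩]

/-- **Matrix form of Theorem 1.** -/
theorem mChannel_perfect_reconstruction_matrix_form
    (M n : ℕ) (hM : 0 < M) (hn : 0 < n)
    (lam : Fin M × Fin n → ℝ) (H G : ℕ → ℝ → ℝ) (c : ℝ)
    (hPR1 : ∀ (q : Fin M) (r : Fin n),
      ∑ m ∈ Finset.range M, G m (lam (q, r)) * H m (lam (q, r)) = c ^ 2)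
    (hPR2 : ∀ (q q' : Fin M) (r : Fin n), q ≠ q' → Even ((q : ℤ) - (q' : ℤ)) →
      ∑ m ∈ Finset.range M, G m (lam (q, r)) * H m (lam (q', r)) = 0)
    (hPR3 : ∀ (q q' : Fin M) (r : Fin n), Odd ((q : ℤ) - (q' : ℤ)) →
      ∑ m ∈ Finset.range M,
        (-1 : ℝ) ^ m * G m (lam (q, r)) * H m (lam (q', r.rev)) = 0) :
    ∑ m ∈ Finset.range M,
        Matrix.diagonal (fun k => G m (lam k)) * tildeSu M n m * tildeSd M n m *
          Matrix.diagonal (fun k => H m (lam k))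
      = c ^ 2 • (1 : Matrix (Fin M × Fin n) (Fin M × Fin n) ℝ) := by
  ext ⟨q, r⟩ ⟨q', r'⟩
  have hentry : ∀ m, (Matrix.diagonal (fun k => G m (lam k)) * tildeSu M n m * tildeSd M n m *
      Matrix.diagonal (fun k => H m (lam k))) (q, r) (q', r')
      = G m (lam (q, r)) * (tildeSu M n m * tildeSd M n m) (q, r) (q', r') *
        H m (lam (q', r')) := by
    intro m
    rw [Matrix.mul_assoc, Matrix.mul_assoc, Matrix.diagonal_mul, ← Matrix.mul_assoc,
      Matrix.mul_diagonal]
    ring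
  rw [Matrix.sum_apply]
  simp only [hentry, tildeSuSd_apply]
  have hpar : Even ((q : ℤ) - (q' : ℤ)) ↔ (Even (q : ℕ) ↔ Even (q' : ℕ)) := by
    rw [Int.even_sub]
    simp [Int.even_coe_nat]
  by_cases hqq : Even (q : ℕ) ↔ Even (q' : ℕ)
  · by_cases hrr : r = r'
    · subst hrr
      by_cases hq : q = q'
      · subst hq
        simp [hqq, hPR1 q r, Matrix.one_apply]
      · have h2 := hPR2 q q' r hq (hpar.mpr hqq)
        simp only [hqq, if_true, if_pos rfl, mul_one]
        rw [h2]
        simp [Matrix.one_apply, hq]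
    · simp [hqq, hrr, Matrix.one_apply, Prod.ext_iff]
  · have hodd : Odd ((q : ℤ) - (q' : ℤ)) :=
      Int.not_even_iff_odd.mp (mt hpar.mp hqq)
    have hq : q ≠ q' := by
      rintro rfl; exact hqq Iff.rfl
    by_cases hrr : r = r'.rev
    · subst hrr
      have h3 := hPR3 q q' r'.rev (by simpa using hodd)
      rw [Fin.rev_rev] at h3
      rw [Finset.sum_congr rfl
        (g := fun x => (-1 : ℝ) ^ x * G x (lam (q, r'.rev)) * H x (lam (q', r')))
        (fun x _ => by rw [if_neg hqq, if_pos rfl]; ring), h3]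
      simp [Matrix.one_apply, hq]
    · simp [hqq, hrr, Matrix.one_apply, Prod.ext_iff, hq]
end

section
/- (Block formula for the per-channel transfer matrix, eq. (11) of the paper) For each m ∈ {0,…,M−1} define T_m = G_m(Λ) S̃_{u,m} S̃_{d,m} H_m(Λ) ∈ ℝ^{N×N}. Then for all q, q′ ∈ {0,…,M−1} and r, r′ ∈ {0,…,n−1}, the (qn+r, q′n+r′) entry of T_m equals G_m(λ_{qn+r}) H_m(λ_{q′n+r′}) δ_{r,r′} if q − q′ is even, and equals (−1)^m G_m(λ_{qn+r}) H_m(λ_{q′n+r′}) δ_{r′, n−1−r} if q − q′ is odd. -/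
/-!
Block formula for the per-channel transfer matrix
`T_m = G_m(Λ) S̃_{u,m} S̃_{d,m} H_m(Λ)` (eq. (11) of the paper).

We index `ℝ^N` (with `N = M * n`) by `Fin M × Fin n`, the pair `(q, r)`
corresponding to the index `q * n + r`.
-/

open Matrix

/-- **Block formula for the per-channel transfer matrix.**  The
`(qn+r, q′n+r′)` entry of `T_m = G_m(Λ) S̃_{u,m} S̃_{d,m} H_m(Λ)` equals
`G_m(λ_{qn+r}) H_m(λ_{q′n+r′}) δ_{r,r′}` if `q − q′` is even, and
`(−1)^m G_m(λ_{qn+r}) H_m(λ_{q′n+r′}) δ_{r′,n−1−r}` if `q − q′` is odd. -/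
theorem transfer_matrix_entries
    (M n : ℕ) (hM : 0 < M) (hn : 0 < n)
    (lam : Fin M × Fin n → ℝ) (H G : ℕ → ℝ → ℝ)
    (m : ℕ) (hm : m < M) (q q' : Fin M) (r r' : Fin n) :
    (Matrix.diagonal (fun k => G m (lam k)) * tildeSu M n m * tildeSd M n m *
        Matrix.diagonal (fun k => H m (lam k))) (q, r) (q', r')
      = if Even ((q : ℤ) - (q' : ℤ)) then
          G m (lam (q, r)) * H m (lam (q', r')) * (if r = r' then 1 else 0)
        else
          (-1 : ℝ) ^ m * G m (lam (q, r)) * H m (lam (q', r')) *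
            (if r' = r.rev then 1 else 0) := by
  have hpow : ((-1:ℝ)^m) * ((-1:ℝ)^m) = 1 := by
    rw [← pow_add]; exact Even.neg_one_pow ⟨m, rfl⟩
  have hpar : Even ((q : ℤ) - (q' : ℤ)) ↔ (Even (q : ℕ) ↔ Even (q' : ℕ)) := by
    rw [Int.even_sub]; simp [Int.even_coe_nat]
  have h2 : (Matrix.diagonal (fun k => G m (lam k)) * tildeSu M n m * tildeSd M n m *
        Matrix.diagonal (fun k => H m (lam k))) (q, r) (q', r')
      = G m (lam (q, r)) * ((tildeSu M n m * tildeSd M n m) (q, r) (q', r'))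
          * H m (lam (q', r')) := by
    rw [Matrix.mul_diagonal, Matrix.mul_assoc, Matrix.diagonal_mul]
  rw [h2, Matrix.mul_apply]
  simp only [tildeSu, tildeSd, Matrix.transpose_apply]
  by_cases hq : Even (q : ℕ) <;> by_cases hq' : Even (q' : ℕ)
  · rw [if_pos (hpar.mpr (iff_of_true hq hq'))]
    simp only [hq, hq', if_true, ite_mul, one_mul, zero_mul]
    rw [Finset.sum_ite_eq' Finset.univ r (fun i => if i = r' then (1:ℝ) else 0)]
    simp only [Finset.mem_univ, if_true]
    by_cases h : r = r' <;> simp [h] <;> ring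
  · rw [if_neg (fun he => hq' (hpar.mp he |>.mp hq))]
    simp only [hq, hq', if_true, if_false]
    have : ∀ i : Fin n, (if i = r then (1:ℝ) else 0) *
        ((-1:ℝ)^m * (if i = r'.rev then 1 else 0))
        = if i = r then ((-1:ℝ)^m * (if i = r'.rev then 1 else 0)) else 0 := by
      intro i; by_cases h : i = r <;> simp [h]
    simp only [this]
    rw [Finset.sum_ite_eq' Finset.univ r
      (fun i => (-1:ℝ)^m * (if i = r'.rev then 1 else 0))]
    simp only [Finset.mem_univ, if_true]
    have hrev : (r = r'.rev) ↔ (r' = r.rev) := by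
      constructor <;> intro h <;> simp [h, Fin.rev_rev]
    by_cases h : r = r'.rev
    · rw [if_pos h, if_pos (hrev.mp h)]; ring
    · rw [if_neg h, if_neg (fun hh => h (hrev.mpr hh))]; ring
  · rw [if_neg (fun he => hq (hpar.mp he |>.mpr hq'))]
    simp only [hq, hq', if_true, if_false]
    have : ∀ i : Fin n, ((-1:ℝ)^m * (if i = r.rev then (1:ℝ) else 0)) *
        (if i = r' then (1:ℝ) else 0)
        = if i = r' then ((-1:ℝ)^m * (if i = r.rev then 1 else 0)) else 0 := by
      intro i; by_cases h : i = r' <;> simp [h, mul_comm]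
    simp only [this]
    rw [Finset.sum_ite_eq' Finset.univ r'
      (fun i => (-1:ℝ)^m * (if i = r.rev then 1 else 0))]
    simp only [Finset.mem_univ, if_true]
    by_cases h : r' = r.rev
    · rw [if_pos h]; ring
    · rw [if_neg h]; ring
  · rw [if_pos (hpar.mpr (iff_of_false hq hq'))]
    simp only [hq, hq', if_false]
    have : ∀ i : Fin n, ((-1:ℝ)^m * (if i = r.rev then (1:ℝ) else 0)) *
        ((-1:ℝ)^m * (if i = r'.rev then (1:ℝ) else 0))
        = if i = r'.rev then ((-1:ℝ)^m * (-1:ℝ)^m * (if i = r.rev then 1 else 0)) else 0 := by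
      intro i; by_cases h : i = r'.rev <;> simp [h] <;> ring
    simp only [this]
    rw [Finset.sum_ite_eq' Finset.univ r'.rev
      (fun i => (-1:ℝ)^m * (-1:ℝ)^m * (if i = r.rev then (1:ℝ) else 0))]
    simp only [Finset.mem_univ, if_true, hpow, one_mul]
    have hrev : (r'.rev = r.rev) ↔ (r = r') := by
      rw [Fin.rev_inj, eq_comm]
    by_cases h : r = r'
    · rw [if_pos (hrev.mpr h), if_pos h]; ring
    · rw [if_neg (fun hh => h (hrev.mp hh)), if_neg h]; ring
end

section
/- (Theorem 2, conversion of classical linear-phase filter banks) Suppose the classical filters 𝙷_m, 𝙶_m satisfy conjugate symmetry and the classical perfect-reconstruction conditions with constant c, and suppose the mapping α satisfies the α-conditions with respect to the graph frequencies λ_0,…,λ_{N−1}. Then the converted graph filters H_m(λ) = h_m(α(λ)) and G_m(λ) = g_m(α(λ)) satisfy the PR conditions of Theorem 1; namely, for all q, q′ ∈ {0,…,M−1} and r ∈ {0,…,n−1}: (i) ∑_{m=0}^{M−1} G_m(λ_{qn+r}) H_m(λ_{qn+r}) = c²; (ii) ∑_{m=0}^{M−1} G_m(λ_{qn+r}) H_m(λ_{q′n+r})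 = 0 whenever q ≠ q′ and q − q′ is even; (iii) ∑_{m=0}^{M−1} (−1)^m G_m(λ_{qn+r}) H_m(λ_{q′n+(n−1−r)}) = 0 whenever q − q′ is odd. -/
open Complex Real

/-- The classical linear-phase frequency response `𝙷_m(ω)` built from the
real zero-phase part `h_m`: `𝙷_m(ω) = e^{−i(L−1)ω/2} h_m(ω)` for even `m`
and `𝙷_m(ω) = i e^{−i(L−1)ω/2} h_m(ω)` for odd `m` (eq. (14) of the paper). -/
noncomputable def classicalFilter (L : ℕ) (h : ℕ → ℝ → ℝ) (m : ℕ) (ω : ℝ) : ℂ :=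
  if Even m then
    Complex.exp (-Complex.I * ((L : ℂ) - 1) * (ω : ℂ) / 2) * (h m ω : ℂ)
  else
    Complex.I * Complex.exp (-Complex.I * ((L : ℂ) - 1) * (ω : ℂ) / 2) * (h m ω : ℂ)

/-- The converted spectral graph filter `H_m(λ)`:
`H_m(λ) = e^{i(L−1)α(λ)/2} 𝙷_m(α(λ))` for even `m` and
`H_m(λ) = −i e^{i(L−1)α(λ)/2} 𝙷_m(α(λ))` for odd `m` (eq. (15) of the paper). -/
noncomputable def convertedFilter (L : ℕ) (α : ℝ → ℝ) (h : ℕ → ℝ → ℝ) (m : ℕ)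
    (lam : ℝ) : ℂ :=
  if Even m then
    Complex.exp (Complex.I * ((L : ℂ) - 1) * (α lam : ℂ) / 2) *
      classicalFilter L h m (α lam)
  else
    -Complex.I * Complex.exp (Complex.I * ((L : ℂ) - 1) * (α lam : ℂ) / 2) *
      classicalFilter L h m (α lam)

lemma exp_cancel (z : ℂ) : Complex.exp z * Complex.exp (-z) = 1 := by
  rw [← Complex.exp_add]; simp

lemma converted_eq (L : ℕ) (α : ℝ → ℝ) (h : ℕ → ℝ → ℝ) (m : ℕ) (lam : ℝ) :
    convertedFilter L α h m lam = (h m (α lam) : ℂ) := by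
  unfold convertedFilter classicalFilter
  by_cases hm : Even m <;> simp only [hm, if_true, if_false, if_neg, if_pos]
  · rw [← mul_assoc, show -Complex.I * ((L:ℂ)-1) * (α lam : ℂ) / 2 = -(Complex.I * ((L:ℂ)-1) * (α lam : ℂ) / 2) by ring, exp_cancel, one_mul]
  · rw [show (-Complex.I * (Complex.exp (Complex.I * ((L:ℂ)-1) * (α lam:ℂ) / 2)) * (Complex.I * Complex.exp (-Complex.I * ((L:ℂ)-1) * (α lam:ℂ) / 2) * (h m (α lam) : ℂ))) = (Complex.exp (Complex.I * ((L:ℂ)-1) * (α lam:ℂ) / 2) * Complex.exp (-Complex.I * ((L:ℂ)-1) * (α lam:ℂ) / 2)) * (-Complex.I * Complex.I) * (h m (α lam):ℂ) by ring]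
    rw [show -Complex.I * ((L:ℂ)-1) * (α lam : ℂ) / 2 = -(Complex.I * ((L:ℂ)-1) * (α lam : ℂ) / 2) by ring, exp_cancel]
    simp [Complex.I_mul_I]

lemma conj_mul_key (L : ℕ) (g h : ℕ → ℝ → ℝ) (m : ℕ) (ω ω' : ℝ) :
    (starRingEnd ℂ) (classicalFilter L g m ω) * classicalFilter L h m ω'
      = Complex.exp (Complex.I * ((L:ℂ)-1) * ((ω:ℂ) - (ω':ℂ)) / 2) * (g m ω : ℂ) * (h m ω' : ℂ) := by
  unfold classicalFilter
  have hc : ∀ x : ℝ, (starRingEnd ℂ) (Complex.exp (-Complex.I * ((L:ℂ)-1) * (x:ℂ) / 2))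
      = Complex.exp (Complex.I * ((L:ℂ)-1) * (x:ℂ) / 2) := by
    intro x
    rw [← Complex.exp_conj]
    congr 1
    simp only [map_div₀, map_mul, map_neg, map_sub, map_one, map_ofNat, Complex.conj_I, Complex.conj_ofReal, Complex.conj_natCast]
    ring
  by_cases hm : Even m <;> simp only [hm, if_true, if_false, if_neg, if_pos, map_mul, hc, Complex.conj_ofReal, map_ofNat, Complex.conj_I]
  · rw [show Complex.exp (Complex.I * ((L:ℂ)-1) * (ω:ℂ)/2) * (g m ω : ℂ) * (Complex.exp (-Complex.I * ((L:ℂ)-1) * (ω':ℂ)/2) * (h m ω' : ℂ)) = (Complex.exp (Complex.I * ((L:ℂ)-1) * (ω:ℂ)/2) * Complex.exp (-Complex.I * ((L:ℂ)-1) * (ω':ℂ)/2)) * (g m ω : ℂ) * (h m ω' : ℂ) by ring, ← Complex.exp_add]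
    congr 2
    ring
  · rw [show -Complex.I * (Complex.exp (Complex.I * ((L:ℂ)-1) * (ω:ℂ)/2)) * (g m ω : ℂ) * (Complex.I * Complex.exp (-Complex.I * ((L:ℂ)-1) * (ω':ℂ)/2) * (h m ω' : ℂ)) = (-Complex.I * Complex.I) * ((Complex.exp (Complex.I * ((L:ℂ)-1) * (ω:ℂ)/2) * Complex.exp (-Complex.I * ((L:ℂ)-1) * (ω':ℂ)/2)) * (g m ω : ℂ) * (h m ω' : ℂ)) by ring, ← Complex.exp_add]
    simp only [Complex.I_mul_I, neg_mul, one_mul, neg_neg]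
    congr 2
    ring

lemma exp_neg_pi_L (L : ℕ) (hLe : Even L) (hL2 : 2 ≤ L) :
    Complex.exp (-(Real.pi : ℂ) * Complex.I * ((L:ℂ) - 1)) = -1 := by
  have h1 : ((L:ℂ) - 1) = ((L - 1 : ℕ) : ℂ) := by
    push_cast [Nat.cast_sub (by omega : 1 ≤ L)]; ring
  rw [h1, show -(Real.pi : ℂ) * Complex.I * ((L-1:ℕ):ℂ) = ((L-1:ℕ):ℂ) * (-((Real.pi:ℂ) * Complex.I)) by ring,
    Complex.exp_nat_mul, Complex.exp_neg, Complex.exp_pi_mul_I]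
  have hodd : Odd (L - 1) := by
    rcases hLe with ⟨k, hk⟩; exact ⟨k - 1, by omega⟩
  rw [inv_neg, inv_one, hodd.neg_one_pow]

lemma sym_real (L : ℕ) (hLe : Even L) (hL2 : 2 ≤ L) (h : ℕ → ℝ → ℝ)
    (hsym : ∀ (m : ℕ) (ω : ℝ), classicalFilter L h m (2 * Real.pi - ω)
      = (starRingEnd ℂ) (classicalFilter L h m ω)) :
    ∀ (m : ℕ) (ω : ℝ), (h m (2 * Real.pi - ω) : ℂ) = -(-1 : ℂ)^m * (h m ω : ℂ) := by
  intro m ω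
  have key := hsym m ω
  unfold classicalFilter at key
  have hc : (starRingEnd ℂ) (Complex.exp (-Complex.I * ((L:ℂ)-1) * (ω:ℂ) / 2))
      = Complex.exp (Complex.I * ((L:ℂ)-1) * (ω:ℂ) / 2) := by
    rw [← Complex.exp_conj]
    congr 1
    simp only [map_div₀, map_mul, map_neg, map_sub, map_one, map_ofNat, Complex.conj_I, Complex.conj_ofReal, Complex.conj_natCast]
    ring
  have hsplit : Complex.exp (-Complex.I * ((L:ℂ)-1) * ((2 * Real.pi - ω : ℝ):ℂ) / 2)
      = Complex.exp (-(Real.pi:ℂ) * Complex.I * ((L:ℂ)-1)) * Complex.exp (Complex.I * ((L:ℂ)-1) * (ω:ℂ) / 2) := by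
    rw [← Complex.exp_add]
    congr 1
    push_cast
    ring
  have hE := Complex.exp_ne_zero (Complex.I * ((L:ℂ)-1) * (ω:ℂ) / 2)
  by_cases hm : Even m
  · simp only [hm, if_true] at key
    rw [hsplit, exp_neg_pi_L L hLe hL2, map_mul, hc, Complex.conj_ofReal] at key
    have := mul_left_cancel₀ hE (by linear_combination key : Complex.exp (Complex.I * ((L:ℂ)-1) * (ω:ℂ)/2) * (-1 * (h m (2*Real.pi - ω) : ℂ)) = Complex.exp (Complex.I * ((L:ℂ)-1) * (ω:ℂ)/2) * (h m ω : ℂ))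
    rw [hm.neg_one_pow]
    linear_combination -this
  · simp only [hm, if_false] at key
    rw [hsplit, exp_neg_pi_L L hLe hL2, map_mul, map_mul, hc, Complex.conj_ofReal, Complex.conj_I] at key
    have := mul_left_cancel₀ hE (by linear_combination key : Complex.exp (Complex.I * ((L:ℂ)-1) * (ω:ℂ)/2) * (Complex.I * -1 * (h m (2*Real.pi - ω) : ℂ)) = Complex.exp (Complex.I * ((L:ℂ)-1) * (ω:ℂ)/2) * (-Complex.I * (h m ω : ℂ)))
    rw [(Nat.not_even_iff_odd.1 hm).neg_one_pow]
    have h2 : (-Complex.I) * (h m (2*Real.pi-ω):ℂ) = (-Complex.I) * (h m ω : ℂ) := by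
      linear_combination this
    rw [mul_left_cancel₀ (neg_ne_zero.2 Complex.I_ne_zero) h2]
    ring

/-- **Theorem 2: conversion of classical linear-phase filter banks.**  If the
classical filters `𝙷_m`, `𝙶_m` satisfy conjugate symmetry and the classical
perfect reconstruction conditions with constant `c`, and the mapping `α`
satisfies the conditions of eq. (19) with respect to the graph frequencies
`λ_0 ≤ … ≤ λ_{N−1}` (`N = M n`), then the converted graph filters
`H_m(λ) = h_m(α(λ))`, `G_m(λ) = g_m(α(λ))` satisfy the perfect reconstruction
conditions of Theorem 1. -/
theorem classical_to_graph_perfect_reconstruction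
    (M n K : ℕ) (hM : Even M) (hM0 : 0 < M) (hn : 0 < n) (hK : 0 < K)
    (L : ℕ) (hL : L = M * K)
    (lam : ℕ → ℝ) (h g : ℕ → ℝ → ℝ) (α : ℝ → ℝ) (c : ℝ)
    -- ordering of the graph frequencies: 0 = λ₀ < λ₁ ≤ … ≤ λ_{N−1}
    (hlam0 : lam 0 = 0) (hlam01 : lam 0 < lam 1)
    (hlam_mono : ∀ i : ℕ, 1 ≤ i → i + 1 < M * n → lam i ≤ lam (i + 1))
    -- conjugate symmetry of the classical filters
    (hsymH : ∀ (m : ℕ) (ω : ℝ),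
      classicalFilter L h m (2 * Real.pi - ω)
        = (starRingEnd ℂ) (classicalFilter L h m ω))
    (hsymG : ∀ (m : ℕ) (ω : ℝ),
      classicalFilter L g m (2 * Real.pi - ω)
        = (starRingEnd ℂ) (classicalFilter L g m ω))
    -- classical perfect reconstruction conditions
    (hcPR1 : ∀ ω : ℝ,
      ∑ m ∈ Finset.range M,
        (starRingEnd ℂ) (classicalFilter L g m ω) * classicalFilter L h m ω
      = ((c : ℂ)) ^ 2)
    (hcPR2 : ∀ (ω : ℝ) (p : ℤ), p % (M : ℤ) ≠ 0 →
      ∑ m ∈ Finset.range M,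
        (starRingEnd ℂ) (classicalFilter L g m ω) *
          classicalFilter L h m (ω + 2 * Real.pi * (p : ℝ) / (M : ℝ)) = 0)
    -- α-conditions (block-index form of eq. (19))
    (hα0 : ∀ r : ℕ, r < n → α (lam r) = Real.pi * lam r / lam (M * n - 1))
    (hαeven : ∀ r : ℕ, r < n → ∀ p : ℕ, p < M → Even p →
      α (lam (r + p * n)) = α (lam r) + 2 * Real.pi * p / M)
    (hαodd : ∀ r : ℕ, r < n → ∀ p : ℕ, p < M → Odd p →
      α (lam ((p + 1) * n - 1 - r))
        = 2 * Real.pi - (α (lam r) + 2 * Real.pi * p / M)) :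
    -- (i) the constant condition
    (∀ q : ℕ, q < M → ∀ r : ℕ, r < n →
      ∑ m ∈ Finset.range M,
        convertedFilter L α g m (lam (q * n + r)) *
          convertedFilter L α h m (lam (q * n + r)) = ((c : ℂ)) ^ 2) ∧
    -- (ii) alias cancellation for even shifts
    (∀ q q' : ℕ, q < M → q' < M → ∀ r : ℕ, r < n →
      q ≠ q' → Even ((q : ℤ) - (q' : ℤ)) →
      ∑ m ∈ Finset.range M,
        convertedFilter L α g m (lam (q * n + r)) *
          convertedFilter L α h m (lam (q' * n + r)) = 0) ∧
    -- (iii) alias cancellation for odd shifts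
    (∀ q q' : ℕ, q < M → q' < M → ∀ r : ℕ, r < n →
      Odd ((q : ℤ) - (q' : ℤ)) →
      ∑ m ∈ Finset.range M,
        (-1 : ℂ) ^ m * convertedFilter L α g m (lam (q * n + r)) *
          convertedFilter L α h m (lam (q' * n + (n - 1 - r))) = 0) := by
  -- basic facts
  have hM2 : 2 ≤ M := by rcases hM with ⟨k, hk⟩; omega
  have hLe : Even L := by rcases hM with ⟨k, hk⟩; exact ⟨k * K, by rw [hL, hk]; ring⟩
  have hL2 : 2 ≤ L := by rw [hL]; nlinarith
  -- real form of the PR conditions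
  have rPR1 : ∀ ω : ℝ, ∑ m ∈ Finset.range M, (g m ω : ℂ) * (h m ω : ℂ) = (c:ℂ)^2 := by
    intro ω
    have key := hcPR1 ω
    rw [Finset.sum_congr rfl (fun m _ => conj_mul_key L g h m ω ω)] at key
    simp only [sub_self, mul_zero, zero_div, Complex.exp_zero, one_mul] at key
    exact key
  have rPR2 : ∀ (ω : ℝ) (p : ℤ), p % (M:ℤ) ≠ 0 →
      ∑ m ∈ Finset.range M, (g m ω : ℂ) * (h m (ω + 2 * Real.pi * (p:ℝ) / (M:ℝ)) : ℂ) = 0 := by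
    intro ω p hp
    have key := hcPR2 ω p hp
    rw [Finset.sum_congr rfl (fun m _ => conj_mul_key L g h m ω (ω + 2 * Real.pi * (p:ℝ) / (M:ℝ)))] at key
    rw [Finset.sum_congr rfl (fun m _ => mul_assoc _ ((g m ω : ℂ)) _), ← Finset.mul_sum] at key
    exact (mul_eq_zero.1 key).resolve_left (Complex.exp_ne_zero _)
  -- symmetry in real form
  have symh := sym_real L hLe hL2 h hsymH
  have symg := sym_real L hLe hL2 g hsymG
  -- parity-of-(-1)^m helper
  have hpow : ∀ m : ℕ, ((-1:ℂ)^m) * ((-1:ℂ)^m) = 1 := by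
    intro m
    rw [← pow_add]
    exact Even.neg_one_pow ⟨m, rfl⟩
  -- p % M ≠ 0 facts
  have hp2 : ∀ a b : ℕ, a < M → b < M → a ≠ b → ((b:ℤ) - (a:ℤ)) % (M:ℤ) ≠ 0 := by
    intro a b ha hb hab hcon
    have hd : (M:ℤ) ∣ ((b:ℤ) - (a:ℤ)) := Int.dvd_of_emod_eq_zero hcon
    have habs : |(b:ℤ) - (a:ℤ)| < (M:ℤ) := by rw [abs_lt]; omega
    have := Int.eq_zero_of_abs_lt_dvd hd habs
    omega
  have hp3 : ∀ p : ℤ, Odd p → p % (M:ℤ) ≠ 0 := by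
    intro p hp hcon
    have hd : (M:ℤ) ∣ p := Int.dvd_of_emod_eq_zero hcon
    rcases hM with ⟨k, hk⟩
    rcases hd with ⟨j, hj⟩
    rcases hp with ⟨i, hi⟩
    have hM' : (M:ℤ) = 2 * (k:ℤ) := by push_cast; omega
    rw [hM'] at hj
    have hp2' : p = 2 * ((k:ℤ) * j) := by rw [hj]; ring
    omega
  -- derived α rules
  have αe : ∀ q : ℕ, q < M → Even q → ∀ r : ℕ, r < n →
      α (lam (q * n + r)) = α (lam r) + 2 * Real.pi * q / M := by
    intro q hq hqe r hr
    have := hαeven r hr q hq hqe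
    rwa [Nat.add_comm r (q * n)] at this
  have αo : ∀ q : ℕ, q < M → Odd q → ∀ r : ℕ, r < n →
      α (lam (q * n + r)) = 2 * Real.pi - (α (lam (n - 1 - r)) + 2 * Real.pi * q / M) := by
    intro q hq hqo r hr
    have h1 := hαodd (n - 1 - r) (by omega) q hq hqo
    have hx : (q + 1) * n = q * n + n := by ring
    have h2 : (q + 1) * n - 1 - (n - 1 - r) = q * n + r := by omega
    rwa [h2] at h1
  refine ⟨?_, ?_, ?_⟩
  · -- (i)
    intro q hq r hr
    simp only [converted_eq]
    exact rPR1 _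
  · -- (ii)
    intro q q' hq hq' r hr hne hpar
    simp only [converted_eq]
    rcases Nat.even_or_odd q with hqe | hqo
    · have hq'e : Even q' := by
        rcases hpar with ⟨k, hk⟩; rcases hqe with ⟨a, ha⟩
        rcases Nat.even_or_odd q' with hb | ⟨b, hb⟩
        · exact hb
        · omega
      have e1 := αe q hq hqe r hr
      have e2 := αe q' hq' hq'e r hr
      simp only [e1, e2]
      have harg : α (lam r) + 2 * Real.pi * (q':ℝ) / (M:ℝ)
          = (α (lam r) + 2 * Real.pi * (q:ℝ) / (M:ℝ)) + 2 * Real.pi * (((q':ℤ) - (q:ℤ) : ℤ) : ℝ) / (M:ℝ) := by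
        push_cast; ring
      simp only [harg]
      exact rPR2 _ _ (hp2 q q' hq hq' hne)
    · have hq'o : Odd q' := by
        rcases hpar with ⟨k, hk⟩; rcases hqo with ⟨a, ha⟩
        rcases Nat.even_or_odd q' with ⟨b, hb⟩ | hb
        · omega
        · exact hb
      have e1 := αo q hq hqo r hr
      have e2 := αo q' hq' hq'o r hr
      simp only [e1, e2]
      have hterm : ∀ m ∈ Finset.range M,
          (g m (2 * Real.pi - (α (lam (n - 1 - r)) + 2 * Real.pi * (q:ℝ) / (M:ℝ))) : ℂ)
            * (h m (2 * Real.pi - (α (lam (n - 1 - r)) + 2 * Real.pi * (q':ℝ) / (M:ℝ))) : ℂ)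
          = (g m (α (lam (n - 1 - r)) + 2 * Real.pi * (q:ℝ) / (M:ℝ)) : ℂ)
            * (h m (α (lam (n - 1 - r)) + 2 * Real.pi * (q':ℝ) / (M:ℝ)) : ℂ) := by
        intro m _
        rw [symg, symh]
        linear_combination ((g m (α (lam (n - 1 - r)) + 2 * Real.pi * (q:ℝ) / (M:ℝ)) : ℂ)
          * (h m (α (lam (n - 1 - r)) + 2 * Real.pi * (q':ℝ) / (M:ℝ)) : ℂ)) * hpow m
      rw [Finset.sum_congr rfl hterm]
      have harg : α (lam (n - 1 - r)) + 2 * Real.pi * (q':ℝ) / (M:ℝ)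
          = (α (lam (n - 1 - r)) + 2 * Real.pi * (q:ℝ) / (M:ℝ)) + 2 * Real.pi * (((q':ℤ) - (q:ℤ) : ℤ) : ℝ) / (M:ℝ) := by
        push_cast; ring
      simp only [harg]
      exact rPR2 _ _ (hp2 q q' hq hq' hne)
  · -- (iii)
    intro q q' hq hq' r hr hodd
    simp only [converted_eq]
    rcases Nat.even_or_odd q with hqe | hqo
    · have hq'o : Odd q' := by
        rcases hodd with ⟨k, hk⟩; rcases hqe with ⟨a, ha⟩
        rcases Nat.even_or_odd q' with ⟨b, hb⟩ | hb
        · omega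
        · exact hb
      have e1 := αe q hq hqe r hr
      have hidx : q' * n + (n - 1 - r) = (q' + 1) * n - 1 - r := by
        have hx : (q' + 1) * n = q' * n + n := by ring
        omega
      have e2 : α (lam (q' * n + (n - 1 - r)))
          = 2 * Real.pi - (α (lam r) + 2 * Real.pi * (q':ℝ) / (M:ℝ)) := by
        rw [hidx]; exact hαodd r hr q' hq' hq'o
      simp only [e1, e2]
      have hterm : ∀ m ∈ Finset.range M,
          (-1:ℂ)^m * (g m (α (lam r) + 2 * Real.pi * (q:ℝ) / (M:ℝ)) : ℂ)
            * (h m (2 * Real.pi - (α (lam r) + 2 * Real.pi * (q':ℝ) / (M:ℝ))) : ℂ)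
          = -((g m (α (lam r) + 2 * Real.pi * (q:ℝ) / (M:ℝ)) : ℂ)
            * (h m (α (lam r) + 2 * Real.pi * (q':ℝ) / (M:ℝ)) : ℂ)) := by
        intro m _
        rw [symh]
        linear_combination (-(g m (α (lam r) + 2 * Real.pi * (q:ℝ) / (M:ℝ)) : ℂ)
          * (h m (α (lam r) + 2 * Real.pi * (q':ℝ) / (M:ℝ)) : ℂ)) * hpow m
      rw [Finset.sum_congr rfl hterm, Finset.sum_neg_distrib, neg_eq_zero]
      have harg : α (lam r) + 2 * Real.pi * (q':ℝ) / (M:ℝ)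
          = (α (lam r) + 2 * Real.pi * (q:ℝ) / (M:ℝ)) + 2 * Real.pi * (((q':ℤ) - (q:ℤ) : ℤ) : ℝ) / (M:ℝ) := by
        push_cast; ring
      simp only [harg]
      refine rPR2 _ _ (hp3 _ ?_)
      rcases hq'o with ⟨b, hb⟩; rcases hqe with ⟨a, ha⟩
      exact ⟨(b:ℤ) - (a:ℤ), by push_cast; omega⟩
    · have hq'e : Even q' := by
        rcases hodd with ⟨k, hk⟩; rcases hqo with ⟨a, ha⟩
        rcases Nat.even_or_odd q' with hb | ⟨b, hb⟩
        · exact hb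
        · omega
      have e1 := αo q hq hqo r hr
      have e2 := αe q' hq' hq'e (n - 1 - r) (by omega)
      simp only [e1, e2]
      have hterm : ∀ m ∈ Finset.range M,
          (-1:ℂ)^m * (g m (2 * Real.pi - (α (lam (n - 1 - r)) + 2 * Real.pi * (q:ℝ) / (M:ℝ))) : ℂ)
            * (h m (α (lam (n - 1 - r)) + 2 * Real.pi * (q':ℝ) / (M:ℝ)) : ℂ)
          = -((g m (α (lam (n - 1 - r)) + 2 * Real.pi * (q:ℝ) / (M:ℝ)) : ℂ)
            * (h m (α (lam (n - 1 - r)) + 2 * Real.pi * (q':ℝ) / (M:ℝ)) : ℂ)) := by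
        intro m _
        rw [symg]
        linear_combination (-(g m (α (lam (n - 1 - r)) + 2 * Real.pi * (q:ℝ) / (M:ℝ)) : ℂ)
          * (h m (α (lam (n - 1 - r)) + 2 * Real.pi * (q':ℝ) / (M:ℝ)) : ℂ)) * hpow m
      rw [Finset.sum_congr rfl hterm, Finset.sum_neg_distrib, neg_eq_zero]
      have harg : α (lam (n - 1 - r)) + 2 * Real.pi * (q':ℝ) / (M:ℝ)
          = (α (lam (n - 1 - r)) + 2 * Real.pi * (q:ℝ) / (M:ℝ)) + 2 * Real.pi * (((q':ℤ) - (q:ℤ) : ℤ) : ℝ) / (M:ℝ) := by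
        push_cast; ring
      simp only [harg]
      refine rPR2 _ _ (hp3 _ ?_)
      rcases hq'e with ⟨b, hb⟩; rcases hqo with ⟨a, ha⟩
      exact ⟨(b:ℤ) - (a:ℤ) - 1, by push_cast; omega⟩
end

section
/- (Appendix, eq. (24): cross-term identity for even shifts) Let p ∈ {1,…,M−1} be even and k ∈ {0,…,n−1}, and write ω_k = α(λ_k). If α(λ_{k+pn}) = α(λ_k) + 2πp/M, then for every m ∈ {0,…,M−1}, G_m(λ_k) · H_m(λ_{k+pn}) = e^{i(L−1)pπ/M} · conj(𝙶_m(ω_k)) · 𝙷_m(ω_k + 2πp/M). -/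
open Complex Real

lemma neg_I_mul_I : -Complex.I * Complex.I = 1 := by
  simp [Complex.I_mul_I]

lemma convertedFilter_eq (L : ℕ) (α : ℝ → ℝ) (h : ℕ → ℝ → ℝ) (m : ℕ) (lam : ℝ) :
    convertedFilter L α h m lam = ((h m (α lam) : ℝ) : ℂ) := by
  unfold convertedFilter classicalFilter
  by_cases hme : Even m
  · simp only [hme, if_true]
    rw [← mul_assoc, ← Complex.exp_add,
      show Complex.I * ((L : ℂ) - 1) * ((α lam : ℝ) : ℂ) / 2 +
        -Complex.I * ((L : ℂ) - 1) * ((α lam : ℝ) : ℂ) / 2 = 0 from by ring,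
      Complex.exp_zero, one_mul]
  · simp only [hme, if_false]
    rw [show -Complex.I * Complex.exp (Complex.I * ((L : ℂ) - 1) * ((α lam : ℝ) : ℂ) / 2) *
        (Complex.I * Complex.exp (-Complex.I * ((L : ℂ) - 1) * ((α lam : ℝ) : ℂ) / 2) *
          ((h m (α lam) : ℝ) : ℂ))
        = (-Complex.I * Complex.I) *
          Complex.exp (Complex.I * ((L : ℂ) - 1) * ((α lam : ℝ) : ℂ) / 2 +
            -Complex.I * ((L : ℂ) - 1) * ((α lam : ℝ) : ℂ) / 2) *
          ((h m (α lam) : ℝ) : ℂ) from by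
        rw [Complex.exp_add]; ring,
      neg_I_mul_I,
      show Complex.I * ((L : ℂ) - 1) * ((α lam : ℝ) : ℂ) / 2 +
        -Complex.I * ((L : ℂ) - 1) * ((α lam : ℝ) : ℂ) / 2 = 0 from by ring,
      Complex.exp_zero, one_mul, one_mul]

lemma conj_classicalFilter (L : ℕ) (h : ℕ → ℝ → ℝ) (m : ℕ) (ω : ℝ) :
    (starRingEnd ℂ) (classicalFilter L h m ω) =
      if Even m then
        Complex.exp (Complex.I * ((L : ℂ) - 1) * (ω : ℂ) / 2) * (h m ω : ℂ)
      else
        -Complex.I * Complex.exp (Complex.I * ((L : ℂ) - 1) * (ω : ℂ) / 2) * (h m ω : ℂ) := by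
  unfold classicalFilter
  have harg : (starRingEnd ℂ) (-Complex.I * ((L : ℂ) - 1) * (ω : ℂ) / 2)
      = Complex.I * ((L : ℂ) - 1) * (ω : ℂ) / 2 := by
    simp only [map_div₀, map_mul, map_neg, map_sub, map_one, map_natCast, map_ofNat,
      Complex.conj_I, Complex.conj_ofReal]
    ring
  by_cases hme : Even m
  · simp only [hme, if_true, map_mul, Complex.conj_ofReal, ← Complex.exp_conj, harg]
  · simp only [hme, if_false, map_mul, Complex.conj_ofReal, Complex.conj_I,
      ← Complex.exp_conj, harg]

lemma exp_combo2 (a b c : ℂ) (hsum : a + b + c = 0) (u v : ℂ) :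
    Complex.exp a * (Complex.exp b * u * (Complex.exp c * v)) = u * v := by
  rw [show Complex.exp a * (Complex.exp b * u * (Complex.exp c * v))
      = Complex.exp a * Complex.exp b * Complex.exp c * (u * v) from by ring,
    ← Complex.exp_add, ← Complex.exp_add, hsum, Complex.exp_zero, one_mul]

lemma exp_combo (a b c : ℂ) (hsum : a + b + c = 0) (u v : ℂ) :
    Complex.exp a * (Complex.exp b * u) * (Complex.exp c * v) = u * v := by
  rw [show Complex.exp a * (Complex.exp b * u) * (Complex.exp c * v)
      = Complex.exp a * Complex.exp b * Complex.exp c * (u * v) from by ring,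
    ← Complex.exp_add, ← Complex.exp_add, hsum, Complex.exp_zero, one_mul]

/-- **Appendix, eq. (24): cross-term identity for even shifts.**  For even
`p ∈ {1,…,M−1}` and `k ∈ {0,…,n−1}` with `ω_k = α(λ_k)`, if
`α(λ_{k+pn}) = α(λ_k) + 2πp/M`, then for every channel `m`,
`G_m(λ_k) H_m(λ_{k+pn}) = e^{i(L−1)pπ/M} conj(𝙶_m(ω_k)) 𝙷_m(ω_k + 2πp/M)`. -/
theorem converted_cross_term_even_shift
    (M n K : ℕ) (hM : Even M) (hM0 : 0 < M) (hn : 0 < n) (hK : 0 < K)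
    (L : ℕ) (hL : L = M * K)
    (lam : ℕ → ℝ) (h g : ℕ → ℝ → ℝ) (α : ℝ → ℝ)
    (p : ℕ) (hp1 : 1 ≤ p) (hp2 : p < M) (hpe : Even p)
    (k : ℕ) (hk : k < n)
    (hα : α (lam (k + p * n)) = α (lam k) + 2 * Real.pi * p / M)
    (m : ℕ) (hm : m < M) :
    convertedFilter L α g m (lam k) * convertedFilter L α h m (lam (k + p * n))
      = Complex.exp (Complex.I * ((L : ℂ) - 1) * (p : ℂ) * (Real.pi : ℂ) / (M : ℂ)) *
          (starRingEnd ℂ) (classicalFilter L g m (α (lam k))) *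
          classicalFilter L h m (α (lam k) + 2 * Real.pi * p / M) := by
  rw [convertedFilter_eq, convertedFilter_eq, hα, conj_classicalFilter]
  unfold classicalFilter
  have hb : ((α (lam k) + 2 * Real.pi * (p : ℝ) / (M : ℝ) : ℝ) : ℂ)
      = ((α (lam k) : ℝ) : ℂ) + 2 * (Real.pi : ℂ) * (p : ℂ) / (M : ℂ) := by
    push_cast; ring
  by_cases hme : Even m
  · simp only [hme, if_true, hb]
    rw [exp_combo _ _ _ (by ring)]
  · simp only [hme, if_false, hb]
    rw [show Complex.exp (Complex.I * ((L : ℂ) - 1) * (p : ℂ) * (Real.pi : ℂ) / (M : ℂ)) *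
        (-Complex.I * Complex.exp (Complex.I * ((L : ℂ) - 1) * ((α (lam k) : ℝ) : ℂ) / 2) *
          (g m (α (lam k)) : ℂ)) *
        (Complex.I *
          Complex.exp (-Complex.I * ((L : ℂ) - 1) *
            (((α (lam k) : ℝ) : ℂ) + 2 * (Real.pi : ℂ) * (p : ℂ) / (M : ℂ)) / 2) *
          (h m (α (lam k) + 2 * Real.pi * (p : ℝ) / (M : ℝ)) : ℂ))
      = (-Complex.I * Complex.I) *
        (Complex.exp (Complex.I * ((L : ℂ) - 1) * (p : ℂ) * (Real.pi : ℂ) / (M : ℂ)) *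
          (Complex.exp (Complex.I * ((L : ℂ) - 1) * ((α (lam k) : ℝ) : ℂ) / 2) *
            (g m (α (lam k)) : ℂ)) *
          (Complex.exp (-Complex.I * ((L : ℂ) - 1) *
            (((α (lam k) : ℝ) : ℂ) + 2 * (Real.pi : ℂ) * (p : ℂ) / (M : ℂ)) / 2) *
            (h m (α (lam k) + 2 * Real.pi * (p : ℝ) / (M : ℝ)) : ℂ))) from by ring,
      neg_I_mul_I, one_mul, exp_combo _ _ _ (by ring)]
end

section
/- (Appendix, eq. (25): cross-term identity for odd shifts, mirrored index) Let p ∈ {1,…,M−1} be odd and k ∈ {0,…,n−1}, and write ω_k = α(λ_k). If α(λ_{(p+1)n−1−k}) = 2π − (α(λ_k) + 2πp/M) and the classical filters satisfy conjugate symmetry, then for every m ∈ {0,…,M−1}, G_m(λ_k) · H_m(λ_{(p+1)n−1−k}) = (−1)^{L−1+m} · e^{i(L−1)pπ/M} · conj(𝙶_m(ω_k)) · 𝙷_m(ω_k + 2πp/M); in particular the factor (−1)^m alternates with the channel index m. -/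
open Complex Real

lemma exp_IA_pi (L : ℕ) (hL1 : 1 ≤ L) :
    Complex.exp (Complex.I * ((L : ℂ) - 1) * (Real.pi : ℂ)) = (-1 : ℂ) ^ (L - 1) := by
  have hc : ((L : ℂ) - 1) = ((L - 1 : ℕ) : ℂ) := by
    push_cast [Nat.cast_sub hL1]; ring
  rw [hc, show Complex.I * ((L - 1 : ℕ) : ℂ) * (Real.pi : ℂ)
      = ((L - 1 : ℕ) : ℂ) * ((Real.pi : ℂ) * Complex.I) from by ring,
    Complex.exp_nat_mul, Complex.exp_pi_mul_I]

lemma sym_val (L : ℕ) (hL1 : 1 ≤ L) (h : ℕ → ℝ → ℝ)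
    (hsymH : ∀ (m : ℕ) (ω : ℝ),
      classicalFilter L h m (2 * Real.pi - ω)
        = (starRingEnd ℂ) (classicalFilter L h m ω))
    (m : ℕ) (x : ℝ) :
    ((h m (2 * Real.pi - x) : ℝ) : ℂ) = (-1 : ℂ) ^ (L - 1 + m) * ((h m x : ℝ) : ℂ) := by
  have hs := hsymH m x
  have hA := exp_IA_pi L hL1
  rcases Nat.even_or_odd m with hme | hmo
  · simp only [classicalFilter, if_pos hme] at hs
    rw [map_mul, ← Complex.exp_conj] at hs
    simp only [map_mul, map_div₀, map_neg, Complex.conj_I, map_sub, map_one,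
      Complex.conj_natCast, Complex.conj_ofReal, map_ofNat, neg_neg] at hs
    have h2 := congrArg (fun z => Complex.exp (Complex.I * ((L : ℂ) - 1) * ((2 * Real.pi - x : ℝ) : ℂ) / 2) * z) hs
    rw [← mul_assoc, ← Complex.exp_add, ← mul_assoc, ← Complex.exp_add] at h2
    rw [show Complex.I * ((L : ℂ) - 1) * ((2 * Real.pi - x : ℝ) : ℂ) / 2 +
        -Complex.I * ((L : ℂ) - 1) * ((2 * Real.pi - x : ℝ) : ℂ) / 2 = 0 from by ring,
      Complex.exp_zero, one_mul] at h2
    rw [h2]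
    rw [show Complex.I * ((L : ℂ) - 1) * ((2 * Real.pi - x : ℝ) : ℂ) / 2 +
        Complex.I * ((L : ℂ) - 1) * (x : ℂ) / 2
        = Complex.I * ((L : ℂ) - 1) * (Real.pi : ℂ) from by push_cast; ring, hA,
      pow_add, Even.neg_one_pow hme]
    ring
  · simp only [classicalFilter, if_neg (Nat.not_even_iff_odd.mpr hmo)] at hs
    rw [map_mul, map_mul, ← Complex.exp_conj] at hs
    simp only [map_mul, map_div₀, map_neg, Complex.conj_I, map_sub, map_one,
      Complex.conj_natCast, Complex.conj_ofReal, map_ofNat, neg_neg] at hs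
    have h2 := congrArg (fun z => Complex.I * Complex.exp (Complex.I * ((L : ℂ) - 1) * ((2 * Real.pi - x : ℝ) : ℂ) / 2) * z) hs
    rw [show Complex.I * Complex.exp (Complex.I * ((L : ℂ) - 1) * ((2 * Real.pi - x : ℝ) : ℂ) / 2) *
        (Complex.I * Complex.exp (-Complex.I * ((L : ℂ) - 1) * ((2 * Real.pi - x : ℝ) : ℂ) / 2) *
          ((h m (2 * Real.pi - x) : ℝ) : ℂ))
        = (Complex.I * Complex.I) *
          (Complex.exp (Complex.I * ((L : ℂ) - 1) * ((2 * Real.pi - x : ℝ) : ℂ) / 2) *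
            Complex.exp (-Complex.I * ((L : ℂ) - 1) * ((2 * Real.pi - x : ℝ) : ℂ) / 2)) *
          ((h m (2 * Real.pi - x) : ℝ) : ℂ) from by ring, ← Complex.exp_add,
      show Complex.I * ((L : ℂ) - 1) * ((2 * Real.pi - x : ℝ) : ℂ) / 2 +
        -Complex.I * ((L : ℂ) - 1) * ((2 * Real.pi - x : ℝ) : ℂ) / 2 = 0 from by ring,
      Complex.exp_zero, Complex.I_mul_I] at h2
    have h3 : ((h m (2 * Real.pi - x) : ℝ) : ℂ)
        = - (Complex.I * Complex.exp (Complex.I * ((L : ℂ) - 1) * ((2 * Real.pi - x : ℝ) : ℂ) / 2) *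
          (-Complex.I * (Complex.exp (Complex.I * ((L : ℂ) - 1) * (x : ℂ) / 2) * ((h m x : ℝ) : ℂ)))) := by
      linear_combination -h2
    rw [h3, show Complex.I * Complex.exp (Complex.I * ((L : ℂ) - 1) * ((2 * Real.pi - x : ℝ) : ℂ) / 2) *
        (-Complex.I * (Complex.exp (Complex.I * ((L : ℂ) - 1) * (x : ℂ) / 2) * ((h m x : ℝ) : ℂ)))
        = (Complex.I * -Complex.I) *
          (Complex.exp (Complex.I * ((L : ℂ) - 1) * ((2 * Real.pi - x : ℝ) : ℂ) / 2) *
            Complex.exp (Complex.I * ((L : ℂ) - 1) * (x : ℂ) / 2)) * ((h m x : ℝ) : ℂ) from by ring,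
      ← Complex.exp_add,
      show Complex.I * ((L : ℂ) - 1) * ((2 * Real.pi - x : ℝ) : ℂ) / 2 +
        Complex.I * ((L : ℂ) - 1) * (x : ℂ) / 2 = Complex.I * ((L : ℂ) - 1) * (Real.pi : ℂ) from by
          push_cast; ring, hA, pow_add, Odd.neg_one_pow hmo,
      show (Complex.I) * -Complex.I = 1 from by simp]
    ring

lemma cross (L M p : ℕ) (g h : ℕ → ℝ → ℝ) (m : ℕ) (x : ℝ) :
    Complex.exp (Complex.I * ((L : ℂ) - 1) * (p : ℂ) * (Real.pi : ℂ) / (M : ℂ)) *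
        (starRingEnd ℂ) (classicalFilter L g m x) *
        classicalFilter L h m (x + 2 * Real.pi * p / M)
      = ((g m x : ℝ) : ℂ) * ((h m (x + 2 * Real.pi * p / M) : ℝ) : ℂ) := by
  rcases Nat.even_or_odd m with hme | hmo
  · simp only [classicalFilter, if_pos hme, map_mul, ← Complex.exp_conj, map_div₀, map_neg,
      Complex.conj_I, map_sub, map_one, Complex.conj_natCast, Complex.conj_ofReal, map_ofNat,
      neg_neg]
    rw [show Complex.exp (Complex.I * ((L : ℂ) - 1) * (p : ℂ) * (Real.pi : ℂ) / (M : ℂ)) *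
        (Complex.exp (Complex.I * ((L : ℂ) - 1) * (x : ℂ) / 2) * ((g m x : ℝ) : ℂ)) *
        (Complex.exp (-Complex.I * ((L : ℂ) - 1) * ((x + 2 * Real.pi * p / M : ℝ) : ℂ) / 2) *
          ((h m (x + 2 * Real.pi * p / M) : ℝ) : ℂ))
        = Complex.exp (Complex.I * ((L : ℂ) - 1) * (p : ℂ) * (Real.pi : ℂ) / (M : ℂ)) *
          Complex.exp (Complex.I * ((L : ℂ) - 1) * (x : ℂ) / 2) *
          Complex.exp (-Complex.I * ((L : ℂ) - 1) * ((x + 2 * Real.pi * p / M : ℝ) : ℂ) / 2) *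
          (((g m x : ℝ) : ℂ) * ((h m (x + 2 * Real.pi * p / M) : ℝ) : ℂ)) from by ring,
      ← Complex.exp_add, ← Complex.exp_add,
      show Complex.I * ((L : ℂ) - 1) * (p : ℂ) * (Real.pi : ℂ) / (M : ℂ) +
        Complex.I * ((L : ℂ) - 1) * (x : ℂ) / 2 +
        -Complex.I * ((L : ℂ) - 1) * ((x + 2 * Real.pi * p / M : ℝ) : ℂ) / 2 = 0 from by
          push_cast; ring,
      Complex.exp_zero, one_mul]
  · simp only [classicalFilter, if_neg (Nat.not_even_iff_odd.mpr hmo), map_mul, ← Complex.exp_conj,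
      map_div₀, map_neg, Complex.conj_I, map_sub, map_one, Complex.conj_natCast,
      Complex.conj_ofReal, map_ofNat, neg_neg]
    rw [show Complex.exp (Complex.I * ((L : ℂ) - 1) * (p : ℂ) * (Real.pi : ℂ) / (M : ℂ)) *
        (-Complex.I * Complex.exp (Complex.I * ((L : ℂ) - 1) * (x : ℂ) / 2) * ((g m x : ℝ) : ℂ)) *
        (Complex.I * Complex.exp (-Complex.I * ((L : ℂ) - 1) * ((x + 2 * Real.pi * p / M : ℝ) : ℂ) / 2) *
          ((h m (x + 2 * Real.pi * p / M) : ℝ) : ℂ))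
        = (-Complex.I * Complex.I) *
          (Complex.exp (Complex.I * ((L : ℂ) - 1) * (p : ℂ) * (Real.pi : ℂ) / (M : ℂ)) *
          Complex.exp (Complex.I * ((L : ℂ) - 1) * (x : ℂ) / 2) *
          Complex.exp (-Complex.I * ((L : ℂ) - 1) * ((x + 2 * Real.pi * p / M : ℝ) : ℂ) / 2)) *
          (((g m x : ℝ) : ℂ) * ((h m (x + 2 * Real.pi * p / M) : ℝ) : ℂ)) from by ring,
      ← Complex.exp_add, ← Complex.exp_add,
      show Complex.I * ((L : ℂ) - 1) * (p : ℂ) * (Real.pi : ℂ) / (M : ℂ) +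
        Complex.I * ((L : ℂ) - 1) * (x : ℂ) / 2 +
        -Complex.I * ((L : ℂ) - 1) * ((x + 2 * Real.pi * p / M : ℝ) : ℂ) / 2 = 0 from by
          push_cast; ring,
      Complex.exp_zero, mul_one, show (-Complex.I) * Complex.I = 1 from by simp, one_mul]

/-- **Appendix, eq. (25): cross-term identity for odd shifts, mirrored
index.**  For odd `p ∈ {1,…,M−1}` and `k ∈ {0,…,n−1}` with `ω_k = α(λ_k)`,
if `α(λ_{(p+1)n−1−k}) = 2π − (α(λ_k) + 2πp/M)` and the classical filters are
conjugate symmetric, then for every channel `m`,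
`G_m(λ_k) H_m(λ_{(p+1)n−1−k})
  = (−1)^{L−1+m} e^{i(L−1)pπ/M} conj(𝙶_m(ω_k)) 𝙷_m(ω_k + 2πp/M)`;
in particular the factor `(−1)^m` alternates with the channel index `m`. -/
theorem converted_cross_term_odd_shift
    (M n K : ℕ) (hM : Even M) (hM0 : 0 < M) (hn : 0 < n) (hK : 0 < K)
    (L : ℕ) (hL : L = M * K)
    (lam : ℕ → ℝ) (h g : ℕ → ℝ → ℝ) (α : ℝ → ℝ)
    (hsymH : ∀ (m : ℕ) (ω : ℝ),
      classicalFilter L h m (2 * Real.pi - ω)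
        = (starRingEnd ℂ) (classicalFilter L h m ω))
    (hsymG : ∀ (m : ℕ) (ω : ℝ),
      classicalFilter L g m (2 * Real.pi - ω)
        = (starRingEnd ℂ) (classicalFilter L g m ω))
    (p : ℕ) (hp1 : 1 ≤ p) (hp2 : p < M) (hpo : Odd p)
    (k : ℕ) (hk : k < n)
    (hα : α (lam ((p + 1) * n - 1 - k))
      = 2 * Real.pi - (α (lam k) + 2 * Real.pi * p / M))
    (m : ℕ) (hm : m < M) :
    convertedFilter L α g m (lam k) *
        convertedFilter L α h m (lam ((p + 1) * n - 1 - k))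
      = (-1 : ℂ) ^ (L - 1 + m) *
          Complex.exp (Complex.I * ((L : ℂ) - 1) * (p : ℂ) * (Real.pi : ℂ) / (M : ℂ)) *
          (starRingEnd ℂ) (classicalFilter L g m (α (lam k))) *
          classicalFilter L h m (α (lam k) + 2 * Real.pi * p / M) := by
  have hL1 : 1 ≤ L := by
    rw [hL]; exact Nat.one_le_iff_ne_zero.mpr (Nat.mul_ne_zero hM0.ne' hK.ne')
  have hc := cross L M p g h m (α (lam k))
  rw [convertedFilter_eq, convertedFilter_eq, hα,
    sym_val L hL1 h hsymH m (α (lam k) + 2 * Real.pi * p / M)]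
  linear_combination (-((-1 : ℂ) ^ (L - 1 + m))) * hc
end

section
/- (Appendix, eq. (28): odd-shift alias cancellation for converted filters) Let p ∈ {1,…,M−1} be odd and k ∈ {0,…,n−1}, and write ω_k = α(λ_k). If α(λ_{(p+1)n−1−k}) = 2π − (α(λ_k) + 2πp/M), the classical filters satisfy conjugate symmetry, and the classical alias-cancellation condition ∑_{m=0}^{M−1} conj(𝙶_m(ω)) 𝙷_m(ω + 2πp/M) = 0 holds for all ω ∈ ℝ, then the alternating sum ∑_{m=0}^{M−1} (−1)^m G_m(λ_k) H_m(λ_{(p+1)n−1−k}) = 0. -/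
open Complex Real

/-- The converted filter equals the real zero-phase part evaluated at `α λ`. -/
lemma conv_eq (L : ℕ) (α : ℝ → ℝ) (h : ℕ → ℝ → ℝ) (m : ℕ) (x : ℝ) :
    convertedFilter L α h m x = ((h m (α x) : ℝ) : ℂ) := by
  have he : Complex.exp (Complex.I * ((L:ℂ)-1) * (α x : ℂ) / 2) *
      Complex.exp (-Complex.I * ((L:ℂ)-1) * (α x : ℂ) / 2) = 1 := by
    rw [← Complex.exp_add]; ring_nf; exact Complex.exp_zero
  unfold convertedFilter classicalFilter
  by_cases hm : Even m <;> simp only [hm, if_true, if_false]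
  · linear_combination ((h m (α x) : ℝ):ℂ) * he
  · linear_combination (-Complex.I^2 * ((h m (α x):ℝ):ℂ)) * he
      - ((h m (α x):ℝ):ℂ) * Complex.I_sq

lemma exp_pi_L (L : ℕ) (hLe : Even L) :
    Complex.exp (Complex.I * ((L : ℂ) - 1) * (Real.pi : ℂ)) = -1 := by
  have h1 : Complex.I * ((L : ℂ) - 1) * (Real.pi : ℂ)
      = (L : ℂ) * ((Real.pi : ℂ) * Complex.I) - (Real.pi : ℂ) * Complex.I := by ring
  rw [h1, Complex.exp_sub, Complex.exp_nat_mul, Complex.exp_pi_mul_I,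
    hLe.neg_one_pow]
  norm_num

/-- Conjugate symmetry of the classical filter forces
`h_m(2π − x) = −(−1)^m h_m(x)` when `L` is even. -/
lemma mirror (L : ℕ) (hLe : Even L) (h : ℕ → ℝ → ℝ) (m : ℕ) (x : ℝ)
    (hs : classicalFilter L h m (2 * Real.pi - x)
      = (starRingEnd ℂ) (classicalFilter L h m x)) :
    ((h m (2 * Real.pi - x) : ℝ) : ℂ) = -(-1 : ℂ) ^ m * ((h m x : ℝ) : ℂ) := by
  have hb : Complex.exp (Complex.I * ((L:ℂ)-1) * (x:ℂ) / 2)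
      = -Complex.exp (-(Complex.I * ((L:ℂ)-1) * (((2 * Real.pi - x : ℝ)):ℂ) / 2)) := by
    have hBA : Complex.I * ((L:ℂ)-1) * (x:ℂ) / 2
        = Complex.I * ((L:ℂ)-1) * (Real.pi : ℂ)
          + -(Complex.I * ((L:ℂ)-1) * (((2 * Real.pi - x : ℝ)):ℂ) / 2) := by
      push_cast; ring
    rw [hBA, Complex.exp_add, exp_pi_L L hLe]; ring
  unfold classicalFilter at hs
  by_cases hm : Even m <;>
    simp only [hm, if_true, if_false, map_mul, Complex.conj_ofReal,
      ← Complex.exp_conj, map_div₀, map_neg, Complex.conj_I, map_sub,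
      map_natCast, map_one, map_ofNat, neg_neg, neg_mul, neg_div] at hs
  · rw [hm.neg_one_pow]
    have : Complex.exp (-(Complex.I * ((L:ℂ)-1) * (((2 * Real.pi - x : ℝ)):ℂ) / 2))
        * ((h m (2 * Real.pi - x) : ℝ) : ℂ)
        = Complex.exp (-(Complex.I * ((L:ℂ)-1) * (((2 * Real.pi - x : ℝ)):ℂ) / 2))
        * (-1 * ((h m x : ℝ) : ℂ)) := by
      rw [hs]; linear_combination ((h m x : ℝ):ℂ) * hb
    have := mul_left_cancel₀ (Complex.exp_ne_zero _) this
    rw [this]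
  · rw [(Nat.not_even_iff_odd.mp hm).neg_one_pow]
    have : Complex.exp (-(Complex.I * ((L:ℂ)-1) * (((2 * Real.pi - x : ℝ)):ℂ) / 2))
        * (Complex.I * ((h m (2 * Real.pi - x) : ℝ) : ℂ))
        = Complex.exp (-(Complex.I * ((L:ℂ)-1) * (((2 * Real.pi - x : ℝ)):ℂ) / 2))
        * (Complex.I * ((h m x : ℝ) : ℂ)) := by
      linear_combination hs - Complex.I * ((h m x : ℝ):ℂ) * hb
    have := mul_left_cancel₀ (Complex.exp_ne_zero _) this
    have h2 := mul_left_cancel₀ Complex.I_ne_zero this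
    rw [h2]; ring

/-- Expand the product `conj(𝙶_m(x)) 𝙷_m(y)` into a common phase factor
times the real zero-phase parts. -/
lemma prod_eq (L : ℕ) (g h : ℕ → ℝ → ℝ) (m : ℕ) (x y : ℝ) :
    (starRingEnd ℂ) (classicalFilter L g m x) * classicalFilter L h m y
      = (Complex.exp (Complex.I * ((L:ℂ)-1) * (x:ℂ) / 2)
          * Complex.exp (-(Complex.I * ((L:ℂ)-1) * (y:ℂ) / 2)))
        * (((g m x : ℝ) : ℂ) * ((h m y : ℝ) : ℂ)) := by
  have hy : -Complex.I * ((L:ℂ)-1) * (y:ℂ) / 2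
      = -(Complex.I * ((L:ℂ)-1) * (y:ℂ) / 2) := by ring
  unfold classicalFilter
  by_cases hm : Even m <;>
    simp only [hm, if_true, if_false, map_mul, Complex.conj_ofReal,
      ← Complex.exp_conj, map_div₀, map_neg, Complex.conj_I, map_sub,
      map_natCast, map_one, map_ofNat, neg_neg, neg_mul, neg_div, hy]
  all_goals first
    | ring1
    | linear_combination (-Complex.exp (Complex.I * ((L:ℂ)-1) * (x:ℂ) / 2)
        * Complex.exp (-(Complex.I * ((L:ℂ)-1) * (y:ℂ) / 2))
        * ((g m x : ℝ):ℂ) * ((h m y : ℝ):ℂ)) * Complex.I_sq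

/-- **Appendix, eq. (28): odd-shift alias cancellation for converted
filters.**  For odd `p ∈ {1,…,M−1}` and `k ∈ {0,…,n−1}` with `ω_k = α(λ_k)`,
if `α(λ_{(p+1)n−1−k}) = 2π − (α(λ_k) + 2πp/M)`, the classical filters are
conjugate symmetric, and the classical alias cancellation condition
`∑_m conj(𝙶_m(ω)) 𝙷_m(ω + 2πp/M) = 0` holds for all `ω`, then
`∑_m (−1)^m G_m(λ_k) H_m(λ_{(p+1)n−1−k}) = 0`. -/
theorem converted_alias_cancellation_odd_shift
    (M n K : ℕ) (hM : Even M) (hM0 : 0 < M) (hn : 0 < n) (hK : 0 < K)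
    (L : ℕ) (hL : L = M * K)
    (lam : ℕ → ℝ) (h g : ℕ → ℝ → ℝ) (α : ℝ → ℝ)
    (hsymH : ∀ (m : ℕ) (ω : ℝ),
      classicalFilter L h m (2 * Real.pi - ω)
        = (starRingEnd ℂ) (classicalFilter L h m ω))
    (hsymG : ∀ (m : ℕ) (ω : ℝ),
      classicalFilter L g m (2 * Real.pi - ω)
        = (starRingEnd ℂ) (classicalFilter L g m ω))
    (p : ℕ) (hp1 : 1 ≤ p) (hp2 : p < M) (hpo : Odd p)
    (k : ℕ) (hk : k < n)
    (hα : α (lam ((p + 1) * n - 1 - k))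
      = 2 * Real.pi - (α (lam k) + 2 * Real.pi * p / M))
    (hAC : ∀ ω : ℝ,
      ∑ m ∈ Finset.range M,
        (starRingEnd ℂ) (classicalFilter L g m ω) *
          classicalFilter L h m (ω + 2 * Real.pi * p / M) = 0) :
    ∑ m ∈ Finset.range M,
        (-1 : ℂ) ^ m * convertedFilter L α g m (lam k) *
          convertedFilter L α h m (lam ((p + 1) * n - 1 - k)) = 0 := by
  have hLe : Even L := hL ▸ hM.mul_right K
  set ω : ℝ := α (lam k) with hωdef
  set ω' : ℝ := ω + 2 * Real.pi * p / M with hω'def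
  -- the classical alias-cancellation with phases stripped
  have hsum : ∑ m ∈ Finset.range M, (((g m ω : ℝ) : ℂ) * ((h m ω' : ℝ) : ℂ)) = 0 := by
    have hA := hAC ω
    rw [Finset.sum_congr rfl (fun m _ => prod_eq L g h m ω ω'), ← Finset.mul_sum] at hA
    have hCne : (Complex.exp (Complex.I * ((L:ℂ)-1) * (ω:ℂ) / 2)
        * Complex.exp (-(Complex.I * ((L:ℂ)-1) * (ω':ℂ) / 2))) ≠ 0 :=
      mul_ne_zero (Complex.exp_ne_zero _) (Complex.exp_ne_zero _)
    exact (mul_eq_zero.mp hA).resolve_left hCne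
  have hstep : ∀ m ∈ Finset.range M,
      (-1 : ℂ) ^ m * convertedFilter L α g m (lam k) *
          convertedFilter L α h m (lam ((p + 1) * n - 1 - k))
        = -(((g m ω : ℝ) : ℂ) * ((h m ω' : ℝ) : ℂ)) := by
    intro m _
    rw [conv_eq, conv_eq, hα]
    rw [mirror L hLe h m ω' (hsymH m ω')]
    have ht : ((-1:ℂ)^m)^2 = 1 := by
      rw [← pow_mul, mul_comm, pow_mul, neg_one_sq, one_pow]
    linear_combination (-((g m ω : ℝ):ℂ) * ((h m ω' : ℝ):ℂ)) * ht
  rw [Finset.sum_congr rfl hstep, Finset.sum_neg_distrib, hsum, neg_zero]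
end
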